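/- arXiv:2210.07238 — 3 statements merged into one kernel-verified Lean document; each statement's English description precedes it below -/
import Mathlib

section
/- \sum_{k=0}^\infty binom(2k,k) H_k / 8^k = -sqrt(2) * log(12 - 8 sqrt(2)). -/
/-!
By `∫₀¹ tⁱ dt = 1 / (i + 1)`, `H_k = ∫₀¹ (1 + t + ⋯ + t^(k-1)) dt`, so for `0 ≤ x < 1/4` dominated
convergence gives `∑ C(2k,k) H_k xᵏ = ∫₀¹ (f x - f (x t)) / (1 - t) dt`, where
`f x = ∑ C(2k,k) xᵏ = 1 / √(1 - 4x)`; the closed form of `f` comes from squaring the series, since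
`∑_{i+j=n} C(2i,i) C(2j,j) = 4ⁿ`. With `a = √(1 - 4x)` and `s = √(1 - 4xt)` the integrand is
`4x / (a s (s + a))`, whose antiderivative is `-(2/a) log (s + a)`. At `x = 1/8`, `a = √2 / 2`.
-/

open Finset

namespace Nat

theorem two_mul_sum_antidiagonal_fst_mul_centralBinom_mul (n : ℕ) :
    2 * ∑ p ∈ antidiagonal n, p.1 * p.1.centralBinom * p.2.centralBinom =
      n * ∑ p ∈ antidiagonal n, p.1.centralBinom * p.2.centralBinom := by
  rw [two_mul]
  nth_rewrite 2 [← Finset.Nat.sum_antidiagonal_swap]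
  rw [← sum_add_distrib, mul_sum]
  refine sum_congr rfl fun p hp => ?_
  rw [← mem_antidiagonal.mp hp, Prod.fst_swap, Prod.snd_swap]
  ring

theorem sum_antidiagonal_succ_fst_mul_centralBinom_mul (n : ℕ) :
    ∑ p ∈ antidiagonal (n + 1), p.1 * p.1.centralBinom * p.2.centralBinom =
      4 * ∑ p ∈ antidiagonal n, p.1 * p.1.centralBinom * p.2.centralBinom +
        2 * ∑ p ∈ antidiagonal n, p.1.centralBinom * p.2.centralBinom := by
  rw [Finset.Nat.sum_antidiagonal_succ, zero_mul, zero_mul, zero_add, mul_sum, mul_sum,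
    ← sum_add_distrib]
  refine sum_congr rfl fun p _ => ?_
  rw [succ_mul_centralBinom_succ]
  ring

theorem sum_antidiagonal_centralBinom_mul_centralBinom (n : ℕ) :
    ∑ p ∈ antidiagonal n, p.1.centralBinom * p.2.centralBinom = 4 ^ n := by
  induction n with
  | zero => simp
  | succ n ih =>
    refine Nat.eq_of_mul_eq_mul_left n.succ_pos ?_
    calc (n + 1) * ∑ p ∈ antidiagonal (n + 1), p.1.centralBinom * p.2.centralBinom
        = 2 * ∑ p ∈ antidiagonal (n + 1), p.1 * p.1.centralBinom * p.2.centralBinom := by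
          rw [two_mul_sum_antidiagonal_fst_mul_centralBinom_mul]
      _ = 4 * (2 * ∑ p ∈ antidiagonal n, p.1 * p.1.centralBinom * p.2.centralBinom) +
            4 * ∑ p ∈ antidiagonal n, p.1.centralBinom * p.2.centralBinom := by
          rw [sum_antidiagonal_succ_fst_mul_centralBinom_mul]; ring
      _ = (n + 1) * 4 ^ (n + 1) := by
          rw [two_mul_sum_antidiagonal_fst_mul_centralBinom_mul, ih]; ring

end Nat

open Real MeasureTheory

section

variable {x : ℝ}

theorem summable_centralBinom_mul_pow (hx0 : 0 ≤ x) (hx : x < 1 / 4) :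
    Summable fun k => (k.centralBinom : ℝ) * x ^ k := by
  refine .of_nonneg_of_le (fun k => by positivity) (fun k => ?_)
    (summable_geometric_of_lt_one (by positivity : 0 ≤ 4 * x) (by linarith))
  rw [mul_pow]
  gcongr
  exact_mod_cast k.centralBinom_le_four_pow

theorem summable_centralBinom_mul_pow_mul_nat (hx0 : 0 ≤ x) (hx : x < 1 / 4) :
    Summable fun k : ℕ => (k.centralBinom : ℝ) * x ^ k * k := by
  refine .of_nonneg_of_le (fun k => by positivity) (fun k => ?_)
    (summable_pow_mul_geometric_of_norm_lt_one 1 (r := 4 * x)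
      (by rw [norm_of_nonneg (by positivity)]; linarith))
  rw [pow_one, mul_comm _ ((4 * x) ^ k), mul_pow]
  gcongr
  exact_mod_cast k.centralBinom_le_four_pow

theorem hasSum_centralBinom_mul_pow (hx0 : 0 ≤ x) (hx : x < 1 / 4) :
    HasSum (fun k => (k.centralBinom : ℝ) * x ^ k) (√(1 - 4 * x))⁻¹ := by
  have hS := summable_centralBinom_mul_pow hx0 hx
  set S := ∑' k, (k.centralBinom : ℝ) * x ^ k
  have hS_norm : Summable fun k => ‖(k.centralBinom : ℝ) * x ^ k‖ := hS.abs
  have hS_sq : S * S = (1 - 4 * x)⁻¹ := by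
    rw [tsum_mul_tsum_eq_tsum_sum_antidiagonal_of_summable_norm hS_norm hS_norm,
      ← tsum_geometric_of_lt_one (by positivity) (by linarith)]
    refine tsum_congr fun n => ?_
    have h4 := congrArg (Nat.cast (R := ℝ)) (Nat.sum_antidiagonal_centralBinom_mul_centralBinom n)
    push_cast at h4
    rw [mul_pow, ← h4, sum_mul]
    refine sum_congr rfl fun p hp => ?_
    rw [← mem_antidiagonal.mp hp, pow_add]
    ring
  have hS_one : 1 ≤ S := by
    simpa using le_hasSum hS.hasSum 0 fun k _ => by positivity
  convert hS.hasSum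
  rw [← sqrt_inv, ← hS_sq, sqrt_mul_self (by linarith)]

theorem hasSum_centralBinom_mul_pow_mul_geom_sum (hx0 : 0 ≤ x) (hx : x < 1 / 4) {t : ℝ}
    (ht0 : 0 ≤ t) (ht1 : t < 1) :
    HasSum (fun k => (k.centralBinom : ℝ) * x ^ k * ∑ i ∈ range k, t ^ i)
      (4 * x / (√(1 - 4 * x) * √(1 - 4 * x * t) * (√(1 - 4 * x * t) + √(1 - 4 * x)))) := by
  have hdiff := ((hasSum_centralBinom_mul_pow hx0 hx).sub
    (hasSum_centralBinom_mul_pow (x := x * t) (by positivity) (by nlinarith))).div_const (1 - t)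
  have ha : 0 < √(1 - 4 * x) := sqrt_pos.2 (by linarith)
  have hs : 0 < √(1 - 4 * x * t) := sqrt_pos.2 (by nlinarith)
  have ha2 := sq_sqrt (by linarith : 0 ≤ 1 - 4 * x)
  have hs2 := sq_sqrt (by nlinarith : 0 ≤ 1 - 4 * x * t)
  have ht : t - 1 ≠ 0 := by linarith
  have ht' : 1 - t ≠ 0 := by linarith
  have hterm : ∀ k : ℕ, (k.centralBinom : ℝ) * x ^ k * ∑ i ∈ range k, t ^ i =
      ((k.centralBinom : ℝ) * x ^ k - k.centralBinom * (x * t) ^ k) / (1 - t) := fun k => by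
    rw [geom_sum_eq ht1.ne, mul_pow]
    field_simp
    ring
  have hval : 4 * x / (√(1 - 4 * x) * √(1 - 4 * x * t) * (√(1 - 4 * x * t) + √(1 - 4 * x))) =
      ((√(1 - 4 * x))⁻¹ - (√(1 - 4 * (x * t)))⁻¹) / (1 - t) := by
    rw [← mul_assoc]
    field_simp
    linear_combination ha2 - hs2
  rw [hval]
  simpa only [hterm] using hdiff

theorem integral_four_mul_div_sqrt_mul_sqrt_add_sqrt (hx : x < 1 / 4) :
    ∫ t in (0 : ℝ)..1,
        4 * x / (√(1 - 4 * x) * √(1 - 4 * x * t) * (√(1 - 4 * x * t) + √(1 - 4 * x))) =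
      2 / √(1 - 4 * x) * log ((1 + √(1 - 4 * x)) / (2 * √(1 - 4 * x))) := by
  set a := √(1 - 4 * x) with ha_def
  have ha : 0 < a := sqrt_pos.2 (by linarith)
  have hs : ∀ t ∈ Set.uIcc (0 : ℝ) 1, 0 < 1 - 4 * x * t := fun t ht => by
    rw [Set.uIcc_of_le zero_le_one] at ht
    nlinarith [mul_nonneg ht.1 (by linarith : 0 ≤ 1 - 4 * x), ht.2]
  have hderiv : ∀ t ∈ Set.uIcc (0 : ℝ) 1,
      HasDerivAt (fun t => -(2 / a) * log (√(1 - 4 * x * t) + a))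
        (4 * x / (a * √(1 - 4 * x * t) * (√(1 - 4 * x * t) + a))) t := fun t ht => by
    have hst := sqrt_pos.2 (hs t ht)
    have := ((((hasDerivAt_id t).const_mul (4 * x)).const_sub 1).sqrt (hs t ht).ne').add_const a
      |>.log (by positivity) |>.const_mul (-(2 / a))
    refine this.congr_deriv ?_
    simp only [id, mul_one]
    field_simp
  have hcont : ContinuousOn
      (fun t => 4 * x / (a * √(1 - 4 * x * t) * (√(1 - 4 * x * t) + a))) (Set.uIcc 0 1) := by
    refine continuousOn_const.div (by fun_prop) fun t ht => ?_
    have := sqrt_pos.2 (hs t ht)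
    positivity
  rw [intervalIntegral.integral_eq_sub_of_hasDerivAt hderiv hcont.intervalIntegrable,
    log_div (by positivity) (by positivity)]
  simp only [mul_zero, sub_zero, mul_one, sqrt_one, ← ha_def, ← two_mul]
  ring

theorem integral_geom_sum_eq_harmonic (k : ℕ) :
    ∫ t in (0 : ℝ)..1, ∑ i ∈ range k, t ^ i = harmonic k := by
  rw [intervalIntegral.integral_finsetSum fun i _ => (continuous_pow i).intervalIntegrable 0 1]
  simp [harmonic]

theorem hasSum_centralBinom_mul_harmonic_mul_pow (hx0 : 0 ≤ x) (hx : x < 1 / 4) :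
    HasSum (fun k => (k.centralBinom : ℝ) * harmonic k * x ^ k)
      (2 / √(1 - 4 * x) * log ((1 + √(1 - 4 * x)) / (2 * √(1 - 4 * x)))) := by
  have hterm : ∀ k : ℕ, (k.centralBinom : ℝ) * harmonic k * x ^ k =
      ∫ t in (0 : ℝ)..1, (k.centralBinom : ℝ) * x ^ k * ∑ i ∈ range k, t ^ i := fun k => by
    rw [intervalIntegral.integral_const_mul, integral_geom_sum_eq_harmonic]
    ring
  simp only [hterm, ← integral_four_mul_div_sqrt_mul_sqrt_add_sqrt hx]
  refine intervalIntegral.hasSum_integral_of_dominated_convergence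
    (fun k _ => (k.centralBinom : ℝ) * x ^ k * k)
    (fun k => (by fun_prop : Continuous _).aestronglyMeasurable) (fun k => ?_)
    (ae_of_all _ fun _ _ => summable_centralBinom_mul_pow_mul_nat hx0 hx)
    intervalIntegrable_const ?_
  · refine ae_of_all _ fun t ht => ?_
    rw [Set.uIoc_of_le zero_le_one] at ht
    have hgeom_nonneg : 0 ≤ ∑ i ∈ range k, t ^ i := sum_nonneg fun i _ => pow_nonneg ht.1.le i
    rw [norm_of_nonneg (by positivity)]
    gcongr
    calc ∑ i ∈ range k, t ^ i ≤ ∑ _i ∈ range k, (1 : ℝ) :=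
          sum_le_sum fun i _ => pow_le_one₀ ht.1.le ht.2
      _ = k := by simp
  · -- the closed form of the pointwise sum needs `t ≠ 1`
    filter_upwards [compl_mem_ae_iff.mpr (measure_singleton (1 : ℝ))] with t ht1 ht
    rw [Set.uIoc_of_le zero_le_one] at ht
    exact hasSum_centralBinom_mul_pow_mul_geom_sum hx0 hx ht.1.le (lt_of_le_of_ne ht.2 ht1)

end

theorem boyadzhiev_at_eighth :
    ∑' k : ℕ,
        (Nat.choose (2 * k) k : ℝ) * (∑ j ∈ Finset.Icc 1 k, (1 : ℝ) / (j : ℝ)) / 8 ^ k =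
      -(Real.sqrt 2) * Real.log (12 - 8 * Real.sqrt 2) := by
  have h2 : √2 ^ 2 = 2 := sq_sqrt zero_le_two
  have ha : √(1 - 4 * (1 / 8) : ℝ) = √2 / 2 := by
    rw [show (1 - 4 * (1 / 8) : ℝ) = (√2 / 2) ^ 2 by rw [div_pow, h2]; norm_num]
    exact sqrt_sq (by positivity)
  have hlog : 12 - 8 * √2 = ((1 + √2 / 2) / (2 * (√2 / 2)))⁻¹ ^ 2 := by
    field_simp
    linear_combination (-(24 + 8 * √2)) * h2
  have hsum := hasSum_centralBinom_mul_harmonic_mul_pow (x := 1 / 8) (by norm_num) (by norm_num)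
  rw [ha] at hsum
  convert hsum.tsum_eq using 1
  · refine tsum_congr fun k => ?_
    rw [← Nat.centralBinom_eq_two_mul_choose, harmonic_eq_sum_Icc]
    push_cast
    simp only [one_div, inv_pow]
    ring
  · rw [hlog, log_pow, log_inv]
    field_simp
    rw [h2]
    norm_num
end

section
/- \sum_{k=0}^\infty binom(2k,k) H_{2k} / 8^k = log(3/2 + sqrt(2)) / sqrt(2). -/
/-!
Since `H_{2k} = ∫₀¹ (1 - t^{2k}) / (1 - t) dt`, the series equals, after exchanging sum and
integral (all terms are nonnegative), `∫₀¹ (G(1/8) - G(t²/8)) / (1 - t) dt`, where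
`G(y) = ∑ₖ C(2k,k) yᵏ = (1 - 4y)^{-1/2}` is the binomial series of exponent `-1/2`.
The integrand `(√2 - √2 / √(2 - t²)) / (1 - t)` has the elementary primitive
`-√2 log (2 - t + √(2 - t²))`.
-/

open Finset Real MeasureTheory

theorem ascPochhammer_smeval_one_half (n : ℕ) :
    (ascPochhammer ℕ n).smeval (1 / 2 : ℝ) = n.factorial * n.centralBinom / 4 ^ n := by
  induction n with
  | zero => simp
  | succ n ih =>
    have hrec : ((n : ℝ) + 1) * (n + 1).centralBinom = 2 * (2 * n + 1) * n.centralBinom := by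
      exact_mod_cast Nat.succ_mul_centralBinom_succ n
    rw [ascPochhammer_succ_right, Polynomial.smeval_mul, ih, Nat.factorial_succ]
    simp only [Polynomial.smeval_add, Polynomial.smeval_X, Polynomial.smeval_natCast, pow_one,
      pow_zero, nsmul_eq_mul, Nat.cast_mul, Nat.cast_succ]
    linear_combination (-(n.factorial : ℝ) / 4 ^ (n + 1)) * hrec

theorem Ring.multichoose_one_half (n : ℕ) :
    Ring.multichoose (1 / 2 : ℝ) n = n.centralBinom / 4 ^ n := by
  have h := Ring.factorial_nsmul_multichoose_eq_ascPochhammer (1 / 2 : ℝ) n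
  rw [ascPochhammer_smeval_one_half, nsmul_eq_mul] at h
  apply mul_left_cancel₀ (by positivity : (n.factorial : ℝ) ≠ 0)
  rw [h]
  ring

theorem hasSum_centralBinom_mul_pow_s9 {y : ℝ} (hy : |y| < 1 / 4) :
    HasSum (fun n ↦ n.centralBinom * y ^ n) (1 / √(1 - 4 * y)) := by
  have hball : 4 * y ∈ Metric.eball (0 : ℝ) 1 := by
    rw [Metric.mem_eball, edist_zero_right, enorm_eq_nnnorm, ENNReal.coe_lt_one_iff,
      ← NNReal.coe_lt_one, coe_nnnorm, norm_mul, Real.norm_eq_abs, Real.norm_eq_abs]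
    norm_num
    linarith
  have h := (one_div_one_sub_rpow_hasFPowerSeriesOnBall_zero (1 / 2)).hasSum hball
  simp only [FormalMultilinearSeries.ofScalars_apply_eq, zero_add, smul_eq_mul,
    ← Ring.multichoose_eq, Ring.multichoose_one_half, ← Real.sqrt_eq_rpow] at h
  refine h.congr_fun fun n ↦ ?_
  rw [mul_pow]
  field_simp

theorem intervalIntegral.tsum_integral_eq_integral_tsum_of_nonneg {ι : Type*} [Countable ι]
    {f : ι → ℝ → ℝ} {a b : ℝ} (hab : a ≤ b)
    (hf_int : ∀ i, IntervalIntegrable (f i) volume a b)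
    (hf_nonneg : ∀ i, ∀ t ∈ Set.Ioc a b, 0 ≤ f i t)
    (hf_sum : Summable fun i ↦ ∫ t in a..b, f i t) :
    ∑' i, ∫ t in a..b, f i t = ∫ t in a..b, ∑' i, f i t := by
  simp only [intervalIntegral.integral_of_le hab] at hf_sum ⊢
  refine integral_tsum_of_summable_integral_norm (fun i ↦ (hf_int i).1) (hf_sum.congr fun i ↦ ?_)
  exact setIntegral_congr_fun measurableSet_Ioc fun t ht ↦
    (Real.norm_of_nonneg (hf_nonneg i t ht)).symm

theorem integral_geom_sum_eq_sum_Icc (n : ℕ) :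
    ∫ t in (0 : ℝ)..1, ∑ i ∈ range n, t ^ i = ∑ j ∈ Icc 1 n, (1 : ℝ) / j := by
  rw [intervalIntegral.integral_finsetSum fun i _ ↦ (continuous_pow i).intervalIntegrable 0 1,
    ← Finset.Ico_add_one_right_eq_Icc, Finset.sum_Ico_eq_sum_range]
  simp [add_comm]

theorem sum_Icc_one_div_le (n : ℕ) : ∑ j ∈ Icc 1 n, (1 : ℝ) / j ≤ n := by
  calc ∑ j ∈ Icc 1 n, (1 : ℝ) / j ≤ ∑ j ∈ Icc 1 n, (1 : ℝ) :=
        sum_le_sum fun j hj ↦ div_le_one_of_le₀ (by exact_mod_cast (mem_Icc.mp hj).1) j.cast_nonneg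
    _ = n := by simp

theorem summable_centralBinom_mul_sum_Icc_one_div_div_eight_pow :
    Summable fun k : ℕ ↦ k.centralBinom * (∑ j ∈ Icc 1 (2 * k), (1 : ℝ) / j) / 8 ^ k := by
  have hgeom : Summable fun k : ℕ ↦ 2 * ((k : ℝ) ^ 1 * (1 / 2) ^ k) :=
    (summable_pow_mul_geometric_of_norm_lt_one (R := ℝ) 1 (r := 1 / 2) (by norm_num)).mul_left 2
  refine hgeom.of_nonneg_of_le (fun k ↦ by positivity) fun k ↦ ?_
  have hbinom : (k.centralBinom : ℝ) ≤ 4 ^ k := by exact_mod_cast k.centralBinom_le_four_pow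
  calc k.centralBinom * (∑ j ∈ Icc 1 (2 * k), (1 : ℝ) / j) / 8 ^ k
      ≤ 4 ^ k * (2 * k) / 8 ^ k := by
        gcongr
        exact_mod_cast sum_Icc_one_div_le (2 * k)
    _ = 2 * ((k : ℝ) ^ 1 * (1 / 2) ^ k) := by
        rw [show (8 : ℝ) ^ k = 4 ^ k * 2 ^ k by rw [← mul_pow]; norm_num, one_div_pow]
        field_simp

theorem hasSum_centralBinom_div_eight_pow_mul_geom_sum {t : ℝ} (ht : t ^ 2 < 2) (ht1 : t ≠ 1) :
    HasSum (fun k : ℕ ↦ k.centralBinom / 8 ^ k * ∑ i ∈ range (2 * k), t ^ i)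
      ((√2 - 1 / √(1 - t ^ 2 / 2)) / (1 - t)) := by
  have hone : HasSum (fun k : ℕ ↦ k.centralBinom * (1 / 8 : ℝ) ^ k) √2 := by
    convert hasSum_centralBinom_mul_pow_s9 (y := 1 / 8) (by norm_num [abs_of_pos]) using 1
    rw [show (1 : ℝ) - 4 * (1 / 8) = 2⁻¹ by norm_num, Real.sqrt_inv, one_div, inv_inv]
  have ht' : HasSum (fun k : ℕ ↦ k.centralBinom * (t ^ 2 / 8) ^ k) (1 / √(1 - t ^ 2 / 2)) := by
    convert hasSum_centralBinom_mul_pow_s9 (y := t ^ 2 / 8)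
      (by rw [abs_of_nonneg (by positivity)]; linarith) using 3
    ring
  refine ((hone.sub ht').div_const (1 - t)).congr_fun fun k ↦ ?_
  have ht1' : 1 - t ≠ 0 := sub_ne_zero.mpr ht1.symm
  rw [geom_sum_eq ht1]
  simp only [div_pow, one_pow, ← pow_mul]
  field_simp
  ring

-- `(√2 - 1 / √(1 - t² / 2)) / (1 - t)` with the factor `1 - t` cancelled, via
-- `(√(2 - t²) - 1) (2 - t + √(2 - t²)) = (1 - t) (√(2 - t²) + t)`,
-- so that it is continuous at `t = 1`.
noncomputable def chenIntegrand (t : ℝ) : ℝ :=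
  √2 * (√(2 - t ^ 2) + t) / (√(2 - t ^ 2) * (2 - t + √(2 - t ^ 2)))

section

variable {t : ℝ}

theorem sqrt_two_sub_sq_pos (ht : t ^ 2 < 2) : 0 < √(2 - t ^ 2) :=
  Real.sqrt_pos.mpr (by linarith)

theorem two_sub_add_sqrt_two_sub_sq_pos (ht : t ^ 2 < 2) : 0 < 2 - t + √(2 - t ^ 2) := by
  have : t < 2 := by nlinarith
  linarith [sqrt_two_sub_sq_pos ht]

theorem sqrt_two_sub_inv_sqrt_div_one_sub_eq_chenIntegrand (ht : t ^ 2 < 2) (ht1 : t ≠ 1) :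
    (√2 - 1 / √(1 - t ^ 2 / 2)) / (1 - t) = chenIntegrand t := by
  have hs := sqrt_two_sub_sq_pos ht
  have hu := (two_sub_add_sqrt_two_sub_sq_pos ht).ne'
  have hs2 : √(2 - t ^ 2) ^ 2 = 2 - t ^ 2 := Real.sq_sqrt (by linarith)
  have ht1' : 1 - t ≠ 0 := sub_ne_zero.mpr ht1.symm
  rw [show 1 - t ^ 2 / 2 = (2 - t ^ 2) / 2 by ring, Real.sqrt_div' _ zero_le_two, chenIntegrand]
  field_simp
  linear_combination hs2

theorem hasDerivAt_neg_sqrt_two_mul_log (ht : t ^ 2 < 2) :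
    HasDerivAt (fun x ↦ -√2 * log (2 - x + √(2 - x ^ 2))) (chenIntegrand t) t := by
  have hs := (sqrt_two_sub_sq_pos ht).ne'
  have hu := (two_sub_add_sqrt_two_sub_sq_pos ht).ne'
  have hsqrt : HasDerivAt (fun x ↦ √(2 - x ^ 2)) (-(2 * t) / (2 * √(2 - t ^ 2))) t := by
    simpa using ((hasDerivAt_pow 2 t).const_sub 2).sqrt (by linarith)
  refine (((((hasDerivAt_id t).const_sub 2).add hsqrt).log hu).const_mul (-√2)).congr_deriv ?_
  simp only [chenIntegrand, Pi.add_apply, id]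
  field_simp
  ring

theorem continuousOn_chenIntegrand : ContinuousOn chenIntegrand {t : ℝ | t ^ 2 < 2} := by
  refine ContinuousOn.div (by fun_prop) (by fun_prop) fun x hx ↦ ?_
  exact mul_ne_zero (sqrt_two_sub_sq_pos hx).ne' (two_sub_add_sqrt_two_sub_sq_pos hx).ne'

end

theorem integral_chenIntegrand :
    ∫ t in (0 : ℝ)..1, chenIntegrand t = log (3 / 2 + √2) / √2 := by
  have hIcc : Set.uIcc (0 : ℝ) 1 ⊆ {t : ℝ | t ^ 2 < 2} := fun t ht ↦ by
    rw [Set.uIcc_of_le zero_le_one] at ht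
    show t ^ 2 < 2
    nlinarith [ht.1, ht.2]
  rw [intervalIntegral.integral_eq_sub_of_hasDerivAt
    (fun t ht ↦ hasDerivAt_neg_sqrt_two_mul_log (hIcc ht))
    ((continuousOn_chenIntegrand.mono hIcc).intervalIntegrable)]
  have h2 : √2 ^ 2 = 2 := Real.sq_sqrt zero_le_two
  have hsq : 3 / 2 + √2 = ((2 + √2) / 2) ^ 2 := by linear_combination (-1 / 4) * h2
  norm_num
  rw [hsq, Real.log_pow, Real.log_div (by positivity) two_ne_zero]
  field_simp
  linear_combination (log (2 + √2) - log 2) * h2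

theorem chen_at_eighth :
    ∑' k : ℕ,
        (Nat.choose (2 * k) k : ℝ) * (∑ j ∈ Finset.Icc 1 (2 * k), (1 : ℝ) / (j : ℝ)) / 8 ^ k =
      Real.log (3 / 2 + Real.sqrt 2) / Real.sqrt 2 := by
  simp only [← Nat.centralBinom_eq_two_mul_choose]
  have hterm (k : ℕ) : (k.centralBinom : ℝ) * (∑ j ∈ Icc 1 (2 * k), (1 : ℝ) / j) / 8 ^ k
      = ∫ t in (0 : ℝ)..1, k.centralBinom / 8 ^ k * ∑ i ∈ range (2 * k), t ^ i := by
    rw [intervalIntegral.integral_const_mul, integral_geom_sum_eq_sum_Icc]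
    ring
  have hsum := summable_centralBinom_mul_sum_Icc_one_div_div_eight_pow
  simp only [hterm] at hsum ⊢
  rw [intervalIntegral.tsum_integral_eq_integral_tsum_of_nonneg zero_le_one
    (fun k ↦ (by fun_prop : Continuous _).intervalIntegrable 0 1)
    (fun k t ht ↦ by have := ht.1.le; positivity) hsum, ← integral_chenIntegrand]
  refine intervalIntegral.integral_congr_Ioo_of_le zero_le_one fun t ht ↦ ?_
  have ht2 : t ^ 2 < 2 := by nlinarith [ht.1, ht.2]
  rw [(hasSum_centralBinom_div_eight_pow_mul_geom_sum ht2 ht.2.ne).tsum_eq,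
    sqrt_two_sub_inv_sqrt_div_one_sub_eq_chenIntegrand ht2 ht.2.ne]
end

section
/- \sum_{k=0}^\infty binom(2k,k) / 8^k * (H_{2k}^{(2)} - (1/4) H_k^{(2)}) = \pi^2 / (16 sqrt(2)). -/
/-!
Write `c_k = binom(2k,k) / 4^k` and `o_k = ∑_{i<k} 1/(2i+1)^2`, so that the summand is
`c_k o_k 2^(-k)` because `H_{2k}^(2) - H_k^(2)/4 = o_k`. From `(2k+2) c_{k+1} = (2k+1) c_k` one gets
`(2k+2) c_{k+1} o_{k+1} = (2k+1) c_k o_k + c_k/(2k+1)`, i.e. first order differential equations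
for the generating functions `C(t) = ∑ c_k t^k`, `F(t) = ∑ c_k o_k t^k` and
`G(t) = ∑ c_k/(2k+1) t^k`.
Solving them with `t = x^2` gives `C(x^2) = 1/√(1-x^2)`, `x G(x^2) = arcsin x` and
`F(x^2) = arcsin² x / (2√(1-x^2))`; evaluate at `x = √2/2`.
-/

open Real Finset Set

noncomputable def powSeries (a : ℕ → ℝ) (t : ℝ) : ℝ := ∑' k, a k * t ^ k

section PowSeries

variable {a r : ℕ → ℝ} {E R t : ℝ}

lemma summable_natCast_pow_mul_mul_pow (n : ℕ) (ha : ∀ k, |a k| ≤ E) (ht : |t| < 1) :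
    Summable fun k : ℕ => (k : ℝ) ^ n * a k * t ^ k := by
  have hgeom := summable_pow_mul_geometric_of_norm_lt_one n (r := |t|) (by simpa using ht)
  refine .of_norm_bounded (hgeom.mul_left E) fun k => ?_
  rw [norm_mul, norm_mul, norm_pow, norm_pow, Real.norm_eq_abs, Real.norm_eq_abs,
    Real.norm_eq_abs, Nat.abs_cast]
  calc (k : ℝ) ^ n * |a k| * |t| ^ k ≤ (k : ℝ) ^ n * E * |t| ^ k := by gcongr; exact ha k
    _ = E * ((k : ℝ) ^ n * |t| ^ k) := by ring

lemma summable_powSeries (ha : ∀ k, |a k| ≤ E) (ht : |t| < 1) :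
    Summable fun k => a k * t ^ k := by
  simpa using summable_natCast_pow_mul_mul_pow 0 ha ht

lemma hasDerivAt_powSeries (ha : ∀ k, |a k| ≤ E) (ht : |t| < 1) :
    HasDerivAt (powSeries a) (powSeries (fun k => (k + 1) * a (k + 1)) t) t := by
  obtain ⟨ρ, htρ', hρ1⟩ := exists_between ht
  have hρ : 0 < ρ := (abs_nonneg t).trans_lt htρ'
  have htρ : t ∈ Ioo (-ρ) ρ := abs_lt.1 htρ'
  have hbound :
      ∀ k, ∀ y ∈ Ioo (-ρ) ρ, ‖a k * (k * y ^ (k - 1))‖ ≤ E / ρ * (k * ρ ^ k) := by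
    intro k y hy
    have hy' : |y| ≤ ρ := (abs_lt.2 hy).le
    have hE : 0 ≤ E := (abs_nonneg _).trans (ha 0)
    rw [norm_mul, norm_mul, norm_pow, Real.norm_eq_abs, Real.norm_eq_abs, Real.norm_eq_abs,
      Nat.abs_cast]
    rcases k with _ | n
    · simp
    · have : |y| ^ n ≤ ρ ^ n := pow_le_pow_left₀ (abs_nonneg y) hy' n
      calc |a (n + 1)| * ((n + 1 : ℕ) * |y| ^ (n + 1 - 1)) ≤ E * ((n + 1 : ℕ) * ρ ^ n) := by
            simp only [Nat.add_sub_cancel]; gcongr; exact ha _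
        _ = E / ρ * ((n + 1 : ℕ) * ρ ^ (n + 1)) := by field_simp; ring
  have hu : Summable fun k : ℕ => E / ρ * (k * ρ ^ k) :=
    ((summable_pow_mul_geometric_of_norm_lt_one 1 (r := ρ)
      (by rwa [Real.norm_of_nonneg hρ.le])).mul_left (E / ρ)).congr (by simp)
  have hderiv := hasDerivAt_tsum_of_isPreconnected hu isOpen_Ioo isPreconnected_Ioo
    (fun k y _ => (hasDerivAt_pow k y).const_mul (a k)) hbound htρ
    (summable_powSeries ha ht) htρ
  refine hderiv.congr_deriv ?_
  rw [(Summable.of_norm_bounded hu (hbound · t htρ)).tsum_eq_zero_add]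
  simp only [powSeries, CharP.cast_eq_zero, zero_mul, mul_zero, zero_add, Nat.cast_add,
    Nat.cast_one, Nat.add_sub_cancel]
  exact tsum_congr fun k => by ring

lemma mul_powSeries_succ (ha : ∀ k, |a k| ≤ E) (ht : |t| < 1) :
    t * powSeries (fun k => (k + 1) * a (k + 1)) t = powSeries (fun k => k * a k) t := by
  have hsum : Summable fun k : ℕ => k * a k * t ^ k := by
    simpa using summable_natCast_pow_mul_mul_pow 1 ha ht
  rw [powSeries, powSeries, hsum.tsum_eq_zero_add, ← tsum_mul_left]
  simp only [CharP.cast_eq_zero, zero_mul, zero_add, Nat.cast_add, Nat.cast_one]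
  exact tsum_congr fun k => by ring

lemma two_mul_one_sub_mul_powSeries_succ (ha : ∀ k, |a k| ≤ E) (hr : ∀ k, |r k| ≤ R)
    (hrec : ∀ k : ℕ, (2 * k + 2) * a (k + 1) = (2 * k + 1) * a k + r k) (ht : |t| < 1) :
    2 * (1 - t) * powSeries (fun k => (k + 1) * a (k + 1)) t = powSeries a t + powSeries r t := by
  have hsum : Summable fun k : ℕ => 2 * (k * a k * t ^ k) := by
    simpa using (summable_natCast_pow_mul_mul_pow 1 ha ht).mul_left 2
  have hsplit : 2 * powSeries (fun k => (k + 1) * a (k + 1)) t =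
      2 * powSeries (fun k => k * a k) t + powSeries a t + powSeries r t := by
    simp only [powSeries]
    rw [← tsum_mul_left, ← tsum_mul_left, ← hsum.tsum_add (summable_powSeries ha ht),
      ← (hsum.add (summable_powSeries ha ht)).tsum_add (summable_powSeries hr ht)]
    exact tsum_congr fun k => by linear_combination t ^ k * hrec k
  linear_combination hsplit - 2 * mul_powSeries_succ ha ht

end PowSeries

lemma powSeries_zero (a : ℕ → ℝ) : powSeries a 0 = a 0 := by
  rw [powSeries, tsum_eq_single 0 fun k hk => by simp [hk]]
  simp

lemma eqOn_of_hasDerivAt {f g f' : ℝ → ℝ} {s : Set ℝ} {x₀ : ℝ} (hs : IsOpen s)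
    (hs' : IsPreconnected s) (hf : ∀ x ∈ s, HasDerivAt f (f' x) x)
    (hg : ∀ x ∈ s, HasDerivAt g (f' x) x) (hx₀ : x₀ ∈ s) (h₀ : f x₀ = g x₀) :
    EqOn f g s :=
  hs.eqOn_of_deriv_eq hs' (fun x hx => (hf x hx).differentiableAt.differentiableWithinAt)
    (fun x hx => (hg x hx).differentiableAt.differentiableWithinAt)
    (fun x hx => (hf x hx).deriv.trans (hg x hx).deriv.symm) hx₀ h₀

noncomputable def centralBinomScaled (k : ℕ) : ℝ := k.centralBinom / 4 ^ k

noncomputable def oddInvSqSum (k : ℕ) : ℝ := ∑ i ∈ range k, 1 / (2 * i + 1 : ℝ) ^ 2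

noncomputable def arcsinCoeff (k : ℕ) : ℝ := centralBinomScaled k / (2 * k + 1)

lemma centralBinomScaled_succ (k : ℕ) :
    (2 * k + 2) * centralBinomScaled (k + 1) = (2 * k + 1) * centralBinomScaled k := by
  have h : ((k : ℝ) + 1) * (k + 1).centralBinom = 2 * (2 * k + 1) * k.centralBinom := by
    exact_mod_cast Nat.succ_mul_centralBinom_succ k
  simp only [centralBinomScaled, pow_succ]
  field_simp
  linear_combination 2 * h

lemma abs_centralBinomScaled_le_one (k : ℕ) : |centralBinomScaled k| ≤ 1 := by
  rw [centralBinomScaled, abs_of_nonneg (by positivity), div_le_one (by positivity)]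
  exact_mod_cast Nat.centralBinom_le_four_pow k

lemma abs_arcsinCoeff_le_one (k : ℕ) : |arcsinCoeff k| ≤ 1 := by
  rw [arcsinCoeff, abs_div, abs_of_pos (by positivity : (0 : ℝ) < 2 * k + 1)]
  calc |centralBinomScaled k| / (2 * k + 1) ≤ |centralBinomScaled k| :=
        div_le_self (abs_nonneg _) (by linarith [(k.cast_nonneg : (0 : ℝ) ≤ k)])
    _ ≤ 1 := abs_centralBinomScaled_le_one k

lemma oddInvSqSum_succ (k : ℕ) : oddInvSqSum (k + 1) = oddInvSqSum k + 1 / (2 * k + 1) ^ 2 :=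
  sum_range_succ _ _

lemma sum_Icc_two_mul_sub_quarter_sum_Icc (k : ℕ) :
    ∑ j ∈ Icc 1 (2 * k), (1 : ℝ) / j ^ 2 - 1 / 4 * ∑ j ∈ Icc 1 k, (1 : ℝ) / j ^ 2 =
      oddInvSqSum k := by
  induction k with
  | zero => simp [oddInvSqSum]
  | succ n ih =>
    rw [show 2 * (n + 1) = 2 * n + 1 + 1 by ring, sum_Icc_succ_top (by omega),
      sum_Icc_succ_top (by omega), sum_Icc_succ_top (by omega), oddInvSqSum_succ, ← ih]
    push_cast
    field_simp
    ring

lemma oddInvSqSum_nonneg (k : ℕ) : 0 ≤ oddInvSqSum k :=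
  sum_nonneg fun _ _ => by positivity

lemma oddInvSqSum_le_two (k : ℕ) : oddInvSqSum k ≤ 2 := by
  rw [← sum_Icc_two_mul_sub_quarter_sum_Icc]
  have hsub : 0 ≤ 1 / 4 * ∑ j ∈ Icc 1 k, (1 : ℝ) / j ^ 2 := by positivity
  have hle : ∑ j ∈ Icc 1 (2 * k), (1 : ℝ) / j ^ 2 ≤ 2 := by
    have hIcc : Finset.Icc 1 (2 * k) = Finset.Ioo 0 (2 * k + 1) := by ext; simp; omega
    simpa [hIcc] using sum_Ioo_inv_sq_le (α := ℝ) 0 (2 * k + 1)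
  linarith

lemma abs_centralBinomScaled_mul_oddInvSqSum_le_two (k : ℕ) :
    |centralBinomScaled k * oddInvSqSum k| ≤ 2 := by
  rw [abs_mul, abs_of_nonneg (oddInvSqSum_nonneg k)]
  calc |centralBinomScaled k| * oddInvSqSum k ≤ 1 * 2 :=
        mul_le_mul (abs_centralBinomScaled_le_one k) (oddInvSqSum_le_two k)
          (oddInvSqSum_nonneg k) zero_le_one
    _ = 2 := one_mul 2

lemma centralBinomScaled_mul_oddInvSqSum_succ (k : ℕ) :
    (2 * k + 2) * (centralBinomScaled (k + 1) * oddInvSqSum (k + 1)) =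
      (2 * k + 1) * (centralBinomScaled k * oddInvSqSum k) + arcsinCoeff k := by
  rw [oddInvSqSum_succ, ← mul_assoc, centralBinomScaled_succ, arcsinCoeff]
  field_simp

lemma powSeries_arcsinCoeff_add_two_mul {t : ℝ} (ht : |t| < 1) :
    powSeries arcsinCoeff t + 2 * (t * powSeries (fun k => (k + 1) * arcsinCoeff (k + 1)) t) =
      powSeries centralBinomScaled t := by
  have hsum : Summable fun k : ℕ => 2 * (k * arcsinCoeff k * t ^ k) := by
    simpa using (summable_natCast_pow_mul_mul_pow 1 abs_arcsinCoeff_le_one ht).mul_left 2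
  rw [mul_powSeries_succ abs_arcsinCoeff_le_one ht, powSeries, powSeries, powSeries,
    ← tsum_mul_left, ← (summable_powSeries abs_arcsinCoeff_le_one ht).tsum_add hsum]
  refine tsum_congr fun k => ?_
  rw [arcsinCoeff]
  field_simp
  ring

section Ioo

variable {x : ℝ}

lemma one_sub_sq_pos (hx : x ∈ Ioo (-1 : ℝ) 1) : 0 < 1 - x ^ 2 := by
  nlinarith [hx.1, hx.2]

lemma abs_sq_lt_one (hx : x ∈ Ioo (-1 : ℝ) 1) : |x ^ 2| < 1 := by
  rw [abs_of_nonneg (sq_nonneg x)]; nlinarith [hx.1, hx.2]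

lemma hasDerivAt_sqrt_one_sub_sq (hx : x ∈ Ioo (-1 : ℝ) 1) :
    HasDerivAt (fun y => √(1 - y ^ 2)) (-x / √(1 - x ^ 2)) x := by
  have h := ((hasDerivAt_pow 2 x).const_sub 1).sqrt (one_sub_sq_pos hx).ne'
  refine h.congr_deriv ?_
  field_simp
  norm_num

lemma hasDerivAt_powSeries_sq {a : ℕ → ℝ} {E : ℝ} (ha : ∀ k, |a k| ≤ E)
    (hx : x ∈ Ioo (-1 : ℝ) 1) :
    HasDerivAt (fun y => powSeries a (y ^ 2))
      (2 * x * powSeries (fun k => (k + 1) * a (k + 1)) (x ^ 2)) x := by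
  have hpow : HasDerivAt (fun y : ℝ => y ^ 2) (2 * x) x := by
    simpa using hasDerivAt_pow 2 x
  refine (HasDerivAt.comp (h := fun y => y ^ 2) x
    (hasDerivAt_powSeries ha (abs_sq_lt_one hx)) hpow).congr_deriv ?_
  ring

lemma powSeries_centralBinomScaled_sq_mul_sqrt (hx : x ∈ Ioo (-1 : ℝ) 1) :
    powSeries centralBinomScaled (x ^ 2) * √(1 - x ^ 2) = 1 := by
  refine eqOn_of_hasDerivAt (f := fun y => powSeries centralBinomScaled (y ^ 2) * √(1 - y ^ 2))
    (g := fun _ => 1) (f' := fun _ => 0) (x₀ := 0) isOpen_Ioo isPreconnected_Ioo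
    (fun y hy => ?_) (fun y _ => hasDerivAt_const y 1) ⟨by norm_num, by norm_num⟩ ?_ hx
  · have hode := two_mul_one_sub_mul_powSeries_succ (r := 0) (R := 0)
      abs_centralBinomScaled_le_one (by simp) (by simpa using centralBinomScaled_succ)
      (abs_sq_lt_one hy)
    refine ((hasDerivAt_powSeries_sq abs_centralBinomScaled_le_one hy).fun_mul
      (hasDerivAt_sqrt_one_sub_sq hy)).congr_deriv ?_
    have hs := Real.sqrt_pos.2 (one_sub_sq_pos hy)
    have hs2 := Real.sq_sqrt (one_sub_sq_pos hy).le
    rw [show powSeries 0 (y ^ 2) = 0 by simp [powSeries], add_zero] at hode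
    set C' := powSeries (fun k => (k + 1) * centralBinomScaled (k + 1)) (y ^ 2)
    field_simp
    linear_combination y * hode + 2 * y * C' * hs2
  · simp [powSeries_zero, centralBinomScaled]

lemma mul_powSeries_arcsinCoeff_sq (hx : x ∈ Ioo (-1 : ℝ) 1) :
    x * powSeries arcsinCoeff (x ^ 2) = arcsin x := by
  refine eqOn_of_hasDerivAt (f := fun y => y * powSeries arcsinCoeff (y ^ 2)) (g := arcsin)
    (f' := fun y => 1 / √(1 - y ^ 2)) (x₀ := 0) isOpen_Ioo isPreconnected_Ioo
    (fun y hy => ?_)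
    (fun y hy => Real.hasDerivAt_arcsin (by linarith [hy.1]) (by linarith [hy.2]))
    ⟨by norm_num, by norm_num⟩ (by simp) hx
  refine ((hasDerivAt_id y).fun_mul
    (hasDerivAt_powSeries_sq abs_arcsinCoeff_le_one hy)).congr_deriv ?_
  have hs := Real.sqrt_pos.2 (one_sub_sq_pos hy)
  have hC := powSeries_centralBinomScaled_sq_mul_sqrt hy
  rw [← powSeries_arcsinCoeff_add_two_mul (abs_sq_lt_one hy)] at hC
  rw [id]
  field_simp
  linear_combination hC

lemma powSeries_mul_oddInvSqSum_sq_mul_sqrt (hx : x ∈ Ioo (-1 : ℝ) 1) :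
    powSeries (fun k => centralBinomScaled k * oddInvSqSum k) (x ^ 2) * √(1 - x ^ 2) =
      arcsin x ^ 2 / 2 := by
  refine eqOn_of_hasDerivAt
    (f := fun y =>
      powSeries (fun k => centralBinomScaled k * oddInvSqSum k) (y ^ 2) * √(1 - y ^ 2))
    (g := fun y => arcsin y ^ 2 / 2) (f' := fun y => arcsin y / √(1 - y ^ 2)) (x₀ := 0)
    isOpen_Ioo isPreconnected_Ioo (fun y hy => ?_) (fun y hy => ?_)
    ⟨by norm_num, by norm_num⟩ (by simp [powSeries_zero, oddInvSqSum]) hx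
  · have hode := two_mul_one_sub_mul_powSeries_succ
      abs_centralBinomScaled_mul_oddInvSqSum_le_two abs_arcsinCoeff_le_one
      centralBinomScaled_mul_oddInvSqSum_succ (abs_sq_lt_one hy)
    refine ((hasDerivAt_powSeries_sq abs_centralBinomScaled_mul_oddInvSqSum_le_two hy).fun_mul
      (hasDerivAt_sqrt_one_sub_sq hy)).congr_deriv ?_
    have hs := Real.sqrt_pos.2 (one_sub_sq_pos hy)
    have hs2 := Real.sq_sqrt (one_sub_sq_pos hy).le
    rw [← mul_powSeries_arcsinCoeff_sq hy]
    set F' :=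
      powSeries (fun k => (k + 1) * (centralBinomScaled (k + 1) * oddInvSqSum (k + 1))) (y ^ 2)
    field_simp
    linear_combination y * hode + 2 * y * F' * hs2
  · refine (((Real.hasDerivAt_arcsin (by linarith [hy.1]) (by linarith [hy.2])).pow 2).div_const
      2).congr_deriv ?_
    field_simp
    ring

end Ioo

lemma powSeries_mul_oddInvSqSum_half :
    powSeries (fun k => centralBinomScaled k * oddInvSqSum k) (1 / 2) = π ^ 2 / (16 * √2) := by
  have hsqrt2 : √2 < 2 := by
    rw [show (2 : ℝ) = √(2 ^ 2) by simp]
    exact Real.sqrt_lt_sqrt (by norm_num) (by norm_num)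
  have hsq : (√2 / 2) ^ 2 = 1 / 2 := by
    rw [div_pow, Real.sq_sqrt zero_le_two]; norm_num
  have hsqrt : √(1 - (√2 / 2) ^ 2) = √2 / 2 := by
    rw [show 1 - (√2 / 2) ^ 2 = (√2 / 2) ^ 2 by rw [hsq]; norm_num,
      Real.sqrt_sq (by positivity)]
  have harcsin : arcsin (√2 / 2) = π / 4 := by
    rw [← sin_pi_div_four, arcsin_sin] <;> linarith [pi_pos]
  have h := powSeries_mul_oddInvSqSum_sq_mul_sqrt (x := √2 / 2)
    ⟨by linarith [Real.sqrt_nonneg 2], by linarith⟩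
  rw [hsqrt, harcsin, hsq] at h
  field_simp at h ⊢
  linear_combination h

theorem sum_central_binom_harmonic2_8pow :
    ∑' k : ℕ,
        (Nat.choose (2 * k) k : ℝ) / 8 ^ k *
          ((∑ j ∈ Finset.Icc 1 (2 * k), (1 : ℝ) / (j : ℝ) ^ 2) -
            (1 / 4) * ∑ j ∈ Finset.Icc 1 k, (1 : ℝ) / (j : ℝ) ^ 2) =
      Real.pi ^ 2 / (16 * Real.sqrt 2) := by
  have hterm : ∀ k : ℕ,
      (Nat.choose (2 * k) k : ℝ) / 8 ^ k *
          ((∑ j ∈ Finset.Icc 1 (2 * k), (1 : ℝ) / (j : ℝ) ^ 2) -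
            (1 / 4) * ∑ j ∈ Finset.Icc 1 k, (1 : ℝ) / (j : ℝ) ^ 2) =
        centralBinomScaled k * oddInvSqSum k * (1 / 2) ^ k := by
    intro k
    rw [sum_Icc_two_mul_sub_quarter_sum_Icc, centralBinomScaled,
      Nat.centralBinom_eq_two_mul_choose, show (8 : ℝ) ^ k = 4 ^ k * 2 ^ k by
        rw [← mul_pow]; norm_num, one_div_pow]
    field_simp
  rw [tsum_congr hterm]
  exact powSeries_mul_oddInvSqSum_half
end
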